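/- Block-triangular truncation in spectral norm: for block matrices with $m$ block-rows/columns, $\|\mathcal{U}_b(M)\|_2 \le (\lceil\log_2 m\rceil + 1)\|M\|_2$ for all $M\in\mathbb{R}^{n\times n}$, where $\mathcal{U}_b$ is the block-upper-triangular truncation and $\|\cdot\|_2$ the spectral norm. -/

import Mathlib

open Matrix

/-- The spectral (ℓ²-operator) norm of a real matrix. -/
noncomputable def specNorm {m n : ℕ} (M : Matrix (Fin m) (Fin n) ℝ) : ℝ :=
  ‖LinearMap.toContinuousLinearMap (Matrix.toEuclideanLin M)‖

/-- Block index of a row/column index `i` with respect to the block structure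
`nb 0 = 0 < nb 1 < ⋯ < nb m = n`: the largest `j ≤ m` with `nb j ≤ i`. -/
def blockOf {n : ℕ} (nb : ℕ → ℕ) (m : ℕ) (i : Fin n) : ℕ :=
  Nat.findGreatest (fun j => nb j ≤ i.1) m

/-- Block-upper-triangular truncation: zero out all blocks strictly below the block
diagonal. -/
def triuB {n : ℕ} (nb : ℕ → ℕ) (m : ℕ) (M : Matrix (Fin n) (Fin n) ℝ) :
    Matrix (Fin n) (Fin n) ℝ :=
  Matrix.of fun i k => if blockOf nb m i ≤ blockOf nb m k then M i k else 0

/-!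
Index the blocks by `a ∈ [0, 2^L)`. Two blocks `a < b` are separated at exactly one dyadic
level `l < L`: there they lie in the left and right halves of the same dyadic interval of length
`2^(l+1)` (the indicators `[a / 2^l < b / 2^l]` telescope). So the block-upper-triangular part of
`M` is its block-diagonal part plus `L` level pieces, and each of these `L + 1` pieces keeps only
the entries in rectangles `R_c × C_c` with pairwise disjoint row sets and pairwise disjoint
column sets. Such a compression `A` has `‖A‖ ≤ ‖M‖`: if `x_c` is the restriction of `x` to
`C_c`, the rows of `A x` in `R_c` are those of `M x_c`, so
`‖A x‖² ≤ ∑_c ‖M x_c‖² ≤ ‖M‖² ∑_c ‖x_c‖² ≤ ‖M‖² ‖x‖²`. Finally `L = ⌈log₂ m⌉` suffices.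
-/

open Finset
open scoped Matrix.Norms.L2Operator

lemma ite_le_eq_ite_eq_add_sum_dyadic {R : Type*} [AddCommGroup R] {a b L : ℕ} (hb : b < 2 ^ L)
    (x : R) :
    (if a ≤ b then x else 0) = (if a = b then x else 0) + ∑ l ∈ range L,
      if Even (a / 2 ^ l) ∧ Odd (b / 2 ^ l) ∧ a / 2 ^ (l + 1) = b / 2 ^ (l + 1) then x else 0 := by
  have step (l : ℕ) :
      (if Even (a / 2 ^ l) ∧ Odd (b / 2 ^ l) ∧ a / 2 ^ (l + 1) = b / 2 ^ (l + 1) then x else 0) =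
        (if a / 2 ^ l < b / 2 ^ l then x else 0) -
          (if a / 2 ^ (l + 1) < b / 2 ^ (l + 1) then x else 0) := by
    simp only [pow_succ, ← Nat.div_div_eq_div_mul, Nat.even_iff, Nat.odd_iff]
    generalize a / 2 ^ l = u, b / 2 ^ l = v
    split_ifs <;> first | omega | simp
  rw [sum_congr rfl fun l _ => step l, sum_range_sub', pow_zero, Nat.div_one, Nat.div_one,
    Nat.div_eq_of_lt hb, if_neg (Nat.not_lt_zero _), sub_zero]
  split_ifs <;> first | omega | simp

namespace Matrix

variable {ι κ α 𝕜 : Type*} [Fintype ι] [Fintype κ] [DecidableEq κ] [RCLike 𝕜]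

lemma sum_norm_sq_mulVec_le (A : Matrix ι κ 𝕜) (x : κ → 𝕜) :
    ∑ i, ‖(A *ᵥ x) i‖ ^ 2 ≤ ‖A‖ ^ 2 * ∑ k, ‖x k‖ ^ 2 := by
  have h := pow_le_pow_left₀ (norm_nonneg _) (A.l2_opNorm_mulVec (WithLp.toLp 2 x)) 2
  rwa [mul_pow, EuclideanSpace.norm_sq_eq, EuclideanSpace.norm_sq_eq] at h

lemma l2_opNorm_le_of_sum_norm_sq_mulVec_le {A : Matrix ι κ 𝕜} {C : ℝ} (hC : 0 ≤ C)
    (h : ∀ x : κ → 𝕜, ∑ i, ‖(A *ᵥ x) i‖ ^ 2 ≤ C ^ 2 * ∑ k, ‖x k‖ ^ 2) : ‖A‖ ≤ C := by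
  refine ContinuousLinearMap.opNorm_le_bound _ hC fun x => ?_
  rw [← pow_le_pow_iff_left₀ (norm_nonneg _) (by positivity) two_ne_zero, mul_pow,
    EuclideanSpace.norm_sq_eq, EuclideanSpace.norm_sq_eq]
  exact h x

lemma l2_opNorm_mask_le [DecidableEq α] (p : ι → Prop) (q : κ → Prop) [DecidablePred p]
    [DecidablePred q] (φ : ι → α) (ψ : κ → α) (M : Matrix ι κ 𝕜) :
    ‖(of fun i k => if p i ∧ q k ∧ φ i = ψ k then M i k else 0 : Matrix ι κ 𝕜)‖ ≤ ‖M‖ := by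
  refine l2_opNorm_le_of_sum_norm_sq_mulVec_le (norm_nonneg M) fun x => ?_
  set xc : α → κ → 𝕜 := fun c k => if q k ∧ ψ k = c then x k else 0
  set S := univ.image φ
  have row (i : ι) : ‖((of fun i k => if p i ∧ q k ∧ φ i = ψ k then M i k else 0 :
      Matrix ι κ 𝕜) *ᵥ x) i‖ ^ 2 ≤ ‖(M *ᵥ xc (φ i)) i‖ ^ 2 := by
    by_cases hp : p i
    · refine le_of_eq (congrArg (‖·‖ ^ 2) (sum_congr rfl fun k _ => ?_))
      simp only [of_apply, xc]
      split_ifs <;> simp_all [eq_comm]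
    · simp [mulVec, dotProduct, hp]
  have col (k : κ) : ∑ c ∈ S, ‖xc c k‖ ^ 2 ≤ ‖x k‖ ^ 2 := by
    calc ∑ c ∈ S, ‖xc c k‖ ^ 2 ≤ ∑ c ∈ S, if ψ k = c then ‖x k‖ ^ 2 else 0 :=
          sum_le_sum fun c _ => by simp only [xc]; split_ifs <;> simp_all
      _ ≤ ‖x k‖ ^ 2 := by rw [sum_ite_eq]; split_ifs; exacts [le_rfl, by positivity]
  calc _ ≤ ∑ i, ∑ c ∈ S, ‖(M *ᵥ xc c) i‖ ^ 2 := sum_le_sum fun i _ => (row i).trans <|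
          single_le_sum (f := fun c => ‖(M *ᵥ xc c) i‖ ^ 2) (fun _ _ => by positivity)
            (mem_image_of_mem φ (mem_univ i))
    _ = ∑ c ∈ S, ∑ i, ‖(M *ᵥ xc c) i‖ ^ 2 := sum_comm
    _ ≤ ∑ c ∈ S, ‖M‖ ^ 2 * ∑ k, ‖xc c k‖ ^ 2 :=
          sum_le_sum fun c _ => sum_norm_sq_mulVec_le M (xc c)
    _ = ‖M‖ ^ 2 * ∑ k, ∑ c ∈ S, ‖xc c k‖ ^ 2 := by rw [← mul_sum, sum_comm]
    _ ≤ ‖M‖ ^ 2 * ∑ k, ‖x k‖ ^ 2 := by gcongr with k; exact col k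

lemma l2_opNorm_blockTriu_le {r : ι → ℕ} {c : κ → ℕ} {L : ℕ} (hc : ∀ k, c k < 2 ^ L)
    (M : Matrix ι κ 𝕜) :
    ‖(of fun i k => if r i ≤ c k then M i k else 0 : Matrix ι κ 𝕜)‖ ≤ (L + 1) * ‖M‖ := by
  have hdecomp : (of fun i k => if r i ≤ c k then M i k else 0 : Matrix ι κ 𝕜) =
      (of fun i k => if r i = c k then M i k else 0) + ∑ l ∈ range L,
        of fun i k => if Even (r i / 2 ^ l) ∧ Odd (c k / 2 ^ l) ∧
          r i / 2 ^ (l + 1) = c k / 2 ^ (l + 1) then M i k else 0 := by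
    ext i k
    simp only [Matrix.add_apply, Matrix.sum_apply, of_apply]
    exact ite_le_eq_ite_eq_add_sum_dyadic (hc k) (M i k)
  rw [hdecomp]
  refine (norm_add_le _ _).trans <| (add_le_add_right (norm_sum_le _ _) _).trans ?_
  calc _ ≤ ‖M‖ + ∑ _l ∈ range L, ‖M‖ := by
        gcongr with l
        · simpa using l2_opNorm_mask_le (fun _ => True) (fun _ => True) r c M
        · exact l2_opNorm_mask_le (fun i => Even (r i / 2 ^ l)) (fun k => Odd (c k / 2 ^ l))
            (fun i => r i / 2 ^ (l + 1)) (fun k => c k / 2 ^ (l + 1)) M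
    _ = (L + 1) * ‖M‖ := by rw [sum_const, card_range, nsmul_eq_mul]; ring

end Matrix

lemma blockOf_lt_two_pow_clog {n m : ℕ} {nb : ℕ → ℕ} (hnbm : nb m = n) (i : Fin n) :
    blockOf nb m i < 2 ^ Nat.clog 2 m := by
  rcases m.eq_zero_or_pos with rfl | hm
  · simp [blockOf]
  refine lt_of_lt_of_le (lt_of_le_of_ne (Nat.findGreatest_le m) fun h => ?_)
    (Nat.le_pow_clog one_lt_two m)
  have hni : nb m ≤ i := (Nat.findGreatest_eq_iff.mp h).2.1 hm.ne'
  omega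

lemma ceil_logb_two_natCast (m : ℕ) : (⌈Real.logb 2 (m : ℝ)⌉ : ℝ) = Nat.clog 2 m := by
  have := Real.ceil_logb_natCast (b := 2) (Nat.cast_nonneg (α := ℝ) m)
  rw [Nat.cast_ofNat, Int.clog_natCast] at this
  exact_mod_cast this

lemma specNorm_eq_l2_opNorm {m n : ℕ} (M : Matrix (Fin m) (Fin n) ℝ) : specNorm M = ‖M‖ := rfl

theorem stmt_18_general (n m : ℕ) (nb : ℕ → ℕ)
    (hnbm : nb m = n)
    (M : Matrix (Fin n) (Fin n) ℝ) :
    specNorm (triuB nb m M) ≤ ((⌈Real.logb 2 (m : ℝ)⌉ : ℝ) + 1) * specNorm M := by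
  rw [ceil_logb_two_natCast, specNorm_eq_l2_opNorm, specNorm_eq_l2_opNorm]
  exact Matrix.l2_opNorm_blockTriu_le (blockOf_lt_two_pow_clog hnbm) M

/-- Lemma `lem:blocktruncinfty`:
`‖𝒰_b(M)‖₂ ≤ (⌈log₂ m⌉ + 1) ‖M‖₂`. -/
theorem stmt_18 (n m : ℕ) (nb : ℕ → ℕ)
    (hnb0 : nb 0 = 0) (hnbm : nb m = n) (hmono : ∀ j < m, nb j < nb (j + 1))
    (M : Matrix (Fin n) (Fin n) ℝ) :
    specNorm (triuB nb m M) ≤ ((⌈Real.logb 2 (m : ℝ)⌉ : ℝ) + 1) * specNorm M :=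
  stmt_18_general n m nb hnbm M
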